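/- For all integers n and n_0 with n ≥ n_0 ≥ 1, the strong geodetic number of the hypercube Q_n satisfies sg(Q_n) ≤ 2^(n - n_0) + 2^(n_0 - 1). -/

import Mathlib

/-!
Split the coordinates of `Qₙ` at `M = n - n₀`. Let `A` be the vertices vanishing on the coordinates
`≤ M` and `B` those equal to `1` on the coordinates `≥ M`, so `|A| = 2^(n₀-1)` and `|B| = 2^(n-n₀)`.
A vertex `w` lies on the geodesic that corrects coordinates from left to right, going from
`a ∈ A` (`w` with the coordinates `≤ M` set to `0`) to `b ∈ B` (`w` with the coordinates `≥ M` set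
to `1`). Since `a ≤ w ≤ b` coordinatewise, `a` precedes `b` lexicographically, so orienting every
pair of `A ∪ B` lexicographically gives a symmetric choice of geodesics that still covers `w`.
-/

open SimpleGraph

/-- A set `S` of vertices is a strong geodetic set of `G` if one can fix, for each
pair of vertices of `S`, a single geodesic (shortest path) between them, so that
every vertex of the graph lies on one of the chosen geodesics. -/
def IsStrongGeodeticSet {V : Type*} (G : SimpleGraph V) (S : Set V) : Prop :=
  ∃ γ : ∀ u ∈ S, ∀ v ∈ S, G.Walk u v,
    (∀ u (hu : u ∈ S) v (hv : v ∈ S), (γ u hu v hv).length = G.dist u v) ∧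
    (∀ u (hu : u ∈ S) v (hv : v ∈ S), γ u hu v hv = (γ v hv u hu).reverse) ∧
    (∀ x : V, ∃ u, ∃ hu : u ∈ S, ∃ v, ∃ hv : v ∈ S, x ∈ (γ u hu v hv).support)

/-- The strong geodetic number of a finite graph: the minimum cardinality of a
strong geodetic set. -/
noncomputable def strongGeodeticNumber {V : Type*} [Fintype V] (G : SimpleGraph V) : ℕ :=
  sInf {k | ∃ S : Finset V, S.card = k ∧ IsStrongGeodeticSet G ↑S}

/-- The hypercube graph `Qₙ` on vertex set `{0,1}ⁿ`; two vertices are adjacent iff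
they differ in exactly one coordinate. -/
def hypercube (n : ℕ) : SimpleGraph (Fin n → Bool) :=
  SimpleGraph.fromRel fun x y => ∃ i, x i ≠ y i ∧ ∀ j, j ≠ i → x j = y j

open Finset Function

namespace SimpleGraph

variable {V : Type*} {G : SimpleGraph V}

lemma strongGeodeticNumber_le_card [Fintype V] {S : Finset V} (h : IsStrongGeodeticSet G ↑S) :
    strongGeodeticNumber G ≤ #S :=
  Nat.sInf_le ⟨S, rfl, h⟩

lemma isStrongGeodeticSet_of_geodesics {L : Type*} [LinearOrder L] (f : V → L) (hf : Injective f)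
    {S : Set V} (p : ∀ u v, G.Walk u v) (hp : ∀ u v, (p u v).length = G.dist u v)
    (hcover : ∀ x, ∃ u ∈ S, ∃ v ∈ S, f u ≤ f v ∧ x ∈ (p u v).support) :
    IsStrongGeodeticSet G S := by
  classical
  let γ (u v : V) : G.Walk u v := if f u ≤ f v then p u v else (p v u).reverse
  refine ⟨fun u _ v _ => γ u v, fun u _ v _ => ?_, fun u _ v _ => ?_, fun x => ?_⟩
  · dsimp only [γ]
    split_ifs
    · exact hp u v
    · rw [Walk.length_reverse, hp, dist_comm]
  · dsimp only [γ]
    rcases lt_trichotomy (f u) (f v) with h | h | h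
    · simp [h.le, not_le.2 h]
    · obtain rfl := hf h
      have hnil : (p u u).Nil := Walk.length_eq_zero_iff.1 (by rw [hp, dist_self])
      simp [hnil.eq_nil]
    · simp [h.le, not_le.2 h]
  · obtain ⟨u, hu, v, hv, huv, hx⟩ := hcover x
    exact ⟨u, hu, v, hv, by simpa [γ, huv] using hx⟩

section walkOfSeq

variable (f : ℕ → V) (hf : ∀ k, f (k + 1) = f k ∨ G.Adj (f k) (f (k + 1)))

open Classical in
noncomputable def walkOfSeq : ∀ k, G.Walk (f 0) (f k)
  | 0 => Walk.nil
  | k + 1 =>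
    if h : G.Adj (f k) (f (k + 1)) then (walkOfSeq k).concat h
    else (walkOfSeq k).copy rfl ((hf k).resolve_right h).symm

lemma length_walkOfSeq_le [DecidableEq V] (k : ℕ) :
    (walkOfSeq f hf k).length ≤ #{j ∈ range k | f (j + 1) ≠ f j} := by
  induction k with
  | zero => simp [walkOfSeq]
  | succ k ih =>
    rw [range_add_one, filter_insert]
    simp only [walkOfSeq]
    split_ifs with hadj hne
    · rw [Walk.length_concat, card_insert_of_notMem (by simp)]
      omega
    · exact absurd hadj.ne.symm hne
    · rw [Walk.length_copy, card_insert_of_notMem (by simp)]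
      omega
    · rwa [Walk.length_copy]

lemma mem_support_walkOfSeq {j k : ℕ} (hjk : j ≤ k) : f j ∈ (walkOfSeq f hf k).support := by
  induction k with
  | zero => simp [Nat.le_zero.1 hjk, walkOfSeq]
  | succ k ih =>
    have hsupp : (walkOfSeq f hf k).support ⊆ (walkOfSeq f hf (k + 1)).support := by
      simp only [walkOfSeq]
      split_ifs <;> simp [Walk.support_concat, Walk.support_copy]
    rcases Nat.of_le_succ hjk with hj | rfl
    · exact hsupp (ih hj)
    · exact Walk.end_mem_support _

end walkOfSeq

end SimpleGraph

namespace hypercube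

variable {n : ℕ} {x y : Fin n → Bool}

lemma adj_iff : (hypercube n).Adj x y ↔ x ≠ y ∧ ∃ i, ∀ j ≠ i, x j = y j := by
  rw [hypercube, SimpleGraph.fromRel_adj]
  refine and_congr_right fun hne => ⟨?_, fun ⟨i, hi⟩ => Or.inl ⟨i, fun h => hne ?_, hi⟩⟩
  · rintro (⟨i, -, hi⟩ | ⟨i, -, hi⟩)
    exacts [⟨i, hi⟩, ⟨i, fun j hj => (hi j hj).symm⟩]
  · funext j
    by_cases hj : j = i
    exacts [hj ▸ h, hi j hj]

lemma hammingDist_le_length (p : (hypercube n).Walk x y) : hammingDist x y ≤ p.length := by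
  induction p with
  | nil => simp
  | @cons x y z hadj p ih =>
    obtain ⟨-, i, hi⟩ := adj_iff.1 hadj
    have hxy : hammingDist x y ≤ 1 := by
      refine card_le_one.2 fun j hj k hk => ?_
      simp only [mem_filter] at hj hk
      exact (of_not_not fun h => hj.2 (hi j h)).trans (of_not_not fun h => hk.2 (hi k h)).symm
    calc hammingDist x z ≤ hammingDist x y + hammingDist y z := hammingDist_triangle x y z
      _ ≤ (Walk.cons _ p).length := by rw [Walk.length_cons]; omega

def blend (x y : Fin n → Bool) (k : ℕ) : Fin n → Bool := fun i => if (i : ℕ) < k then y i else x i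

lemma blend_zero : blend x y 0 = x :=
  rfl

lemma blend_of_le {k : ℕ} (hk : n ≤ k) : blend x y k = y := by
  funext i
  simp [blend, i.2.trans_le hk]

lemma blend_succ_eq_of_eq {k : ℕ} (h : ∀ i : Fin n, (i : ℕ) = k → x i = y i) :
    blend x y (k + 1) = blend x y k := by
  funext i
  simp only [blend]
  split_ifs <;> first | rfl | omega | exact (h i (by omega)).symm

lemma blend_succ_eq_or_adj (k : ℕ) :
    blend x y (k + 1) = blend x y k ∨ (hypercube n).Adj (blend x y k) (blend x y (k + 1)) := by
  refine or_iff_not_imp_left.2 fun hne => adj_iff.2 ⟨Ne.symm hne, ?_⟩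
  obtain ⟨i, hik, -⟩ : ∃ i : Fin n, (i : ℕ) = k ∧ x i ≠ y i := by
    by_contra! h
    exact hne (blend_succ_eq_of_eq h)
  refine ⟨i, fun j hj => ?_⟩
  have : (j : ℕ) ≠ k := fun h => hj (Fin.ext (h.trans hik.symm))
  simp only [blend]
  split_ifs <;> first | rfl | omega

noncomputable def geodesic (x y : Fin n → Bool) : (hypercube n).Walk x y :=
  (SimpleGraph.walkOfSeq (blend x y) blend_succ_eq_or_adj n).copy blend_zero (blend_of_le le_rfl)

lemma length_geodesic_le : (geodesic x y).length ≤ hammingDist x y := by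
  rw [geodesic, Walk.length_copy]
  refine (SimpleGraph.length_walkOfSeq_le _ _ n).trans ?_
  calc #{j ∈ range n | blend x y (j + 1) ≠ blend x y j}
      ≤ #(({i | x i ≠ y i} : Finset (Fin n)).image Fin.val) := by
        refine card_le_card fun j hj => ?_
        obtain ⟨hjn, hne⟩ := mem_filter.1 hj
        refine mem_image.2 ⟨⟨j, mem_range.1 hjn⟩, mem_filter.2 ⟨mem_univ _, fun h => hne ?_⟩, rfl⟩
        exact blend_succ_eq_of_eq fun i hi => (Fin.ext hi : i = ⟨j, _⟩) ▸ h
    _ ≤ hammingDist x y := card_image_le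

lemma dist_eq_hammingDist : (hypercube n).dist x y = hammingDist x y := by
  refine le_antisymm ((SimpleGraph.dist_le _).trans length_geodesic_le) ?_
  obtain ⟨p, hp⟩ := (geodesic x y).reachable.exists_walk_length_eq_dist
  exact hp ▸ hammingDist_le_length p

lemma length_geodesic : (geodesic x y).length = (hypercube n).dist x y :=
  le_antisymm (length_geodesic_le.trans dist_eq_hammingDist.ge) (SimpleGraph.dist_le _)

lemma blend_mem_support_geodesic {k : ℕ} (hk : k ≤ n) : blend x y k ∈ (geodesic x y).support := by
  rw [geodesic, Walk.support_copy]
  exact SimpleGraph.mem_support_walkOfSeq _ _ hk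

end hypercube

section subcube

variable {ι β : Type*} [Fintype ι] [DecidableEq ι] [Fintype β]

def subcube (s : Finset ι) (b : β) : Finset (ι → β) :=
  Fintype.piFinset fun i => if i ∈ s then {b} else univ

variable {s : Finset ι} {b : β} {x : ι → β}

lemma mem_subcube : x ∈ subcube s b ↔ ∀ i ∈ s, x i = b := by
  simp only [subcube, Fintype.mem_piFinset]
  refine forall_congr' fun i => ?_
  split_ifs <;> simp [*]

lemma card_subcube : #(subcube s b) = Fintype.card β ^ (Fintype.card ι - #s) := by
  simp only [subcube, Fintype.card_piFinset, apply_ite card, card_singleton, card_univ]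
  rw [prod_ite, prod_const_one, one_mul, prod_const, filter_not,
    card_sdiff_of_subset (subset_univ _)]
  simp

end subcube

namespace hypercube

variable {n : ℕ}

lemma isStrongGeodeticSet_subcube_union (M : Fin n) :
    IsStrongGeodeticSet (hypercube n) ↑(subcube (Iic M) false ∪ subcube (Ici M) true) := by
  refine isStrongGeodeticSet_of_geodesics toLex toLex.injective geodesic
    (fun _ _ => length_geodesic) fun w => ?_
  let a : Fin n → Bool := fun i => if i ≤ M then false else w i
  let b : Fin n → Bool := fun i => if M ≤ i then true else w i
  have ha : a ∈ subcube (Iic M) false := mem_subcube.2 fun i hi => if_pos (mem_Iic.1 hi)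
  have hb : b ∈ subcube (Ici M) true := mem_subcube.2 fun i hi => if_pos (mem_Ici.1 hi)
  have hab : a ≤ b := fun i => by
    simp only [a, b]
    split_ifs <;> simp
  -- `w` agrees with `b` below `M` and with `a` above `M`; the coordinate `M` decides the split.
  have hw : blend a b (M + (w M).toNat) = w := by
    funext i
    simp only [blend, a, b, Fin.le_def]
    have := (w M).toNat_le
    rcases lt_trichotomy (i : ℕ) M with h | h | h
    · rw [if_pos (by omega), if_neg h.not_ge]
    · obtain rfl : i = M := Fin.ext h
      cases w i <;> simp
    · rw [if_neg (by omega), if_neg h.not_ge]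
  refine ⟨a, by simp [ha], b, by simp [hb], Pi.toLex_monotone hab, hw ▸ ?_⟩
  exact blend_mem_support_geodesic (by have := (w M).toNat_le; omega)

end hypercube

/-- Intermediate result in Theorem 4.2: for `n ≥ n₀ ≥ 1`,
`sg(Qₙ) ≤ 2^(n - n₀) + 2^(n₀ - 1)`. -/
theorem sg_hypercube_upper_split (n n₀ : ℕ) (h1 : 1 ≤ n₀) (h2 : n₀ ≤ n) :
    strongGeodeticNumber (hypercube n) ≤ 2 ^ (n - n₀) + 2 ^ (n₀ - 1) := by
  let M : Fin n := ⟨n - n₀, by omega⟩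
  calc strongGeodeticNumber (hypercube n)
      ≤ #(subcube (Iic M) false ∪ subcube (Ici M) true) :=
        strongGeodeticNumber_le_card (hypercube.isStrongGeodeticSet_subcube_union M)
    _ ≤ #(subcube (Iic M) false) + #(subcube (Ici M) true) := card_union_le _ _
    _ = 2 ^ (n - n₀) + 2 ^ (n₀ - 1) := by
        simp only [card_subcube, Fin.card_Iic, Fin.card_Ici, Fintype.card_bool, Fintype.card_fin, M]
        rw [add_comm]
        congr 2 <;> omega
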